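/- Let C be a conjugation on H, M a closed proper subspace of H, and V : M → H a C-symmetric contraction. Assume that (range D_{V*}) ∩ C(M⊥) = {0}. Then: (a) the closure of D_{V*}(C(M)) := {D_{V*}(C h) : h ∈ M} equals 𝔇_{V*}; and (b) every contraction K̃ : M⊥ → H with range contained in 𝔇_{V*} satisfying K̃*(D_{V*}(C h)) = P⊥(C(V h)) for all h ∈ M is an isometry, i.e. ‖K̃ g‖ = ‖g‖ for all g ∈ M⊥ (equivalently, the operator X₀ = K̃* restricted to 𝔇_{V*} is a co-isometry). -/

import Mathlib

local notation "⟪" x ", " y "⟫" => @inner ℂ _ _ x y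

def IsConjugation {H : Type*} [NormedAddCommGroup H] [InnerProductSpace ℂ H]
    (C : H → H) : Prop :=
  (∀ x y, C (x + y) = C x + C y) ∧
  (∀ (a : ℂ) (x : H), C (a • x) = (starRingEnd ℂ) a • C x) ∧
  (∀ x, ‖C x‖ = ‖x‖) ∧
  (∀ x, C (C x) = x)

section Aux
variable {H : Type*} [NormedAddCommGroup H] [InnerProductSpace ℂ H]
variable {C : H → H}

theorem IsConjugation.re_inner (hC : IsConjugation C) (x y : H) :
    Complex.re ⟪C x, C y⟫ = Complex.re ⟪x, y⟫ := by
  obtain ⟨Cadd, Csmul, Cnorm, Cinv⟩ := hC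
  have h1 := norm_add_sq (𝕜 := ℂ) (C x) (C y)
  have h2 := norm_add_sq (𝕜 := ℂ) x y
  rw [← Cadd, Cnorm, Cnorm, Cnorm] at h1
  have h3 : (2:ℝ) * RCLike.re ⟪C x, C y⟫ = 2 * RCLike.re ⟪x, y⟫ := by linarith
  have h4 : RCLike.re ⟪C x, C y⟫ = RCLike.re ⟪x, y⟫ := by linarith
  simpa using h4

theorem IsConjugation.inner_conj (hC : IsConjugation C) (x y : H) :
    ⟪C x, C y⟫ = ⟪y, x⟫ := by
  have hre := hC.re_inner x y
  have him : Complex.im ⟪C x, C y⟫ = - Complex.im ⟪x, y⟫ := by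
    have h1 : C ((-Complex.I) • y) = Complex.I • C y := by
      rw [hC.2.1]; norm_num
    have h2 := hC.re_inner x ((-Complex.I) • y)
    rw [h1] at h2
    rw [inner_smul_right, inner_smul_right] at h2
    simp [Complex.mul_re] at h2
    linarith
  have hyx : (⟪y, x⟫).re = (⟪x, y⟫).re ∧ (⟪y, x⟫).im = -(⟪x, y⟫).im := by
    constructor
    · simpa using inner_re_symm (𝕜 := ℂ) y x
    · simpa using inner_im_symm (𝕜 := ℂ) y x
  apply Complex.ext
  · rw [hyx.1]; exact hre
  · rw [hyx.2]; exact him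

theorem IsConjugation.inner_swap (hC : IsConjugation C) (x y : H) :
    ⟪C x, y⟫ = ⟪C y, x⟫ := by
  conv_lhs => rw [← hC.2.2.2 y]
  rw [hC.inner_conj]

theorem IsConjugation.zero (hC : IsConjugation C) : C 0 = 0 := by
  have h := hC.1 0 0
  simp only [add_zero] at h
  have := congrArg (· - C 0) h
  simpa using this.symm

theorem IsConjugation.neg (hC : IsConjugation C) (x : H) : C (-x) = - C x := by
  have : C ((-1 : ℂ) • x) = ((starRingEnd ℂ) (-1)) • C x := hC.2.1 (-1) x
  simpa using this

theorem IsConjugation.sub (hC : IsConjugation C) (x y : H) : C (x - y) = C x - C y := by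
  rw [sub_eq_add_neg, hC.1, hC.neg, sub_eq_add_neg]

theorem IsConjugation.continuous (hC : IsConjugation C) : Continuous C := by
  have : Isometry C := by
    refine Isometry.of_dist_eq (fun a b => ?_)
    rw [dist_eq_norm, dist_eq_norm, ← hC.sub, hC.2.2.1]
  exact this.continuous
theorem sqle_aux : ∀ a b : ℝ, 0 ≤ a → 0 ≤ b → a^2 ≤ b^2 → a ≤ b := by
  intro a b ha hb h
  by_contra hc
  push_neg at hc
  nlinarith

end Aux

set_option maxHeartbeats 2000000 in
/-- if `ran D_{V*} ∩ C(M⊥) = {0}`, then (a) the closure of `D_{V*}(C(M))`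
equals the closure of the range of `D_{V*}`, and (b) every contraction `K̃ : M⊥ → H` with
range in that closure whose adjoint extends `X₀ : D_{V*}(C h) ↦ P⊥(C(V h))` is an
isometry. -/
theorem stmt_14 {H : Type*} [NormedAddCommGroup H] [InnerProductSpace ℂ H] [CompleteSpace H]
    (C : H → H) (hC : IsConjugation C)
    (M : Submodule ℂ H) [CompleteSpace M] (hproper : M ≠ ⊤)
    (V : M →L[ℂ] H)
    (hV : ∀ x y : M, ⟪C (y : H), V x⟫ = ⟪C (V y), (x : H)⟫)
    (hVc : ‖V‖ ≤ 1)
    (D : H →L[ℂ] H) (hD : D.IsPositive)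
    (hD2 : D ∘L D = ContinuousLinearMap.id ℂ H - V ∘L ContinuousLinearMap.adjoint V)
    (htriv : ∀ x : H, x ∈ LinearMap.range (D : H →ₗ[ℂ] H) → x ∈ C '' (Mᗮ : Set H) → x = 0) :
    (closure {x : H | ∃ h : M, D (C (h : H)) = x} = closure (LinearMap.range (D : H →ₗ[ℂ] H) : Set H)) ∧
    (∀ K : Mᗮ →L[ℂ] H, ‖K‖ ≤ 1 →
      (∀ f : Mᗮ, K f ∈ closure (LinearMap.range (D : H →ₗ[ℂ] H) : Set H)) →
      (∀ h : M, ((ContinuousLinearMap.adjoint K (D (C (h : H))) : H))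
          = ((Submodule.orthogonalProjectionOnto Mᗮ (C (V h)) : H))) →
      ∀ g : Mᗮ, ‖K g‖ = ‖(g : H)‖) := by
  have Cadd := hC.1
  have Csmul := hC.2.1
  have Cnorm := hC.2.2.1
  have Cinv := hC.2.2.2
  set Vs := ContinuousLinearMap.adjoint V with hVsdef
  have hDsa : ContinuousLinearMap.adjoint D = D := ContinuousLinearMap.isSelfAdjoint_iff'.mp hD.isSelfAdjoint
  have hDi : ∀ x y : H, ⟪D x, y⟫ = ⟪x, D y⟫ := fun x y => by
    conv_lhs => rw [← hDsa]
    exact ContinuousLinearMap.adjoint_inner_left D y x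
  have hR : ∀ y : H, V (Vs y) = y - D (D y) := by
    intro y
    have h := ContinuousLinearMap.ext_iff.mp hD2 y
    simp only [ContinuousLinearMap.comp_apply, ContinuousLinearMap.sub_apply,
      ContinuousLinearMap.id_apply] at h
    rw [h]; abel
  have hdag : ∀ h : M, Vs (C (h : H)) = Submodule.orthogonalProjectionOnto M (C (V h)) := by
    intro h
    apply ext_inner_right ℂ
    intro m
    rw [ContinuousLinearMap.adjoint_inner_left]
    rw [hV m h]
    exact (Submodule.inner_orthogonalProjectionOnto_eq_of_mem_right (K := M) m (C (V h))).symm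
  have hCMperp : ∀ z : H, (∀ m : M, ⟪D (C (m : H)), z⟫ = 0) → D z = 0 := by
    intro z hz
    refine htriv (D z) (LinearMap.mem_range.mpr ⟨z, rfl⟩) ?_
    refine ⟨C (D z), ?_, Cinv _⟩
    rw [SetLike.mem_coe, Submodule.mem_orthogonal]
    intro u hu
    have h1 : ⟪C (D z), u⟫ = 0 := by
      rw [hC.inner_swap, ← hDi]
      exact hz ⟨u, hu⟩
    rw [← inner_conj_symm u (C (D z)), h1]
    simp
  have parta : closure {x : H | ∃ h : M, D (C (h : H)) = x}
      = closure (LinearMap.range (D : H →ₗ[ℂ] H) : Set H) := by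
    let U : Submodule ℂ H :=
      { carrier := {x : H | ∃ h : M, D (C (h : H)) = x}
        add_mem' := by
          rintro a b ⟨h1, rfl⟩ ⟨h2, rfl⟩
          exact ⟨h1 + h2, by rw [Submodule.coe_add, Cadd, map_add]⟩
        zero_mem' := ⟨0, by rw [Submodule.coe_zero, hC.zero, map_zero]⟩
        smul_mem' := by
          rintro a x ⟨h1, rfl⟩
          refine ⟨(starRingEnd ℂ) a • h1, ?_⟩
          rw [Submodule.coe_smul, Csmul]
          simp }
    have hUle : U ≤ LinearMap.range (D : H →ₗ[ℂ] H) := by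
      rintro x ⟨h1, rfl⟩
      exact LinearMap.mem_range.mpr ⟨C ↑h1, rfl⟩
    have horth : Uᗮ = (LinearMap.range (D : H →ₗ[ℂ] H))ᗮ := by
      refine le_antisymm ?_ (Submodule.orthogonal_le hUle)
      intro z hz
      rw [Submodule.mem_orthogonal] at hz ⊢
      have hDz : D z = 0 := hCMperp z (fun m => hz _ ⟨m, rfl⟩)
      rintro u ⟨w, rfl⟩
      rw [ContinuousLinearMap.coe_coe, hDi, hDz, inner_zero_right]
    have hcl : U.topologicalClosure = (LinearMap.range (D : H →ₗ[ℂ] H)).topologicalClosure := by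
      rw [← Submodule.orthogonal_orthogonal_eq_closure,
        ← Submodule.orthogonal_orthogonal_eq_closure, horth]
    calc closure {x : H | ∃ h : M, D (C (h : H)) = x}
        = ↑U.topologicalClosure := (Submodule.topologicalClosure_coe U).symm
      _ = ↑(LinearMap.range (D : H →ₗ[ℂ] H)).topologicalClosure := by rw [hcl]
      _ = closure (LinearMap.range (D : H →ₗ[ℂ] H) : Set H) := Submodule.topologicalClosure_coe _
  refine ⟨parta, ?_⟩
  intro K hK1 hK2 hK3 g
  -- basic V* facts
  have hRsa : ∀ a b : H, ⟪V (Vs a), b⟫ = ⟪a, V (Vs b)⟫ := by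
    intro a b
    rw [← ContinuousLinearMap.adjoint_inner_right V (Vs a) b]
    rw [ContinuousLinearMap.adjoint_inner_left]
  have hnormVs : ∀ y : H, (‖Vs y‖^2 : ℝ) = RCLike.re ⟪y, V (Vs y)⟫ := by
    intro y
    rw [← inner_self_eq_norm_sq (𝕜 := ℂ)]
    congr 1
    rw [ContinuousLinearMap.adjoint_inner_left]
  have hE3 : ∀ x : H, Vs (C ((Vs x : M) : H)) = Submodule.orthogonalProjectionOnto M (C (V (Vs x))) := by
    intro x
    apply ext_inner_right ℂ
    intro m
    rw [ContinuousLinearMap.adjoint_inner_left]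
    rw [hC.inner_swap]
    rw [← Submodule.inner_orthogonalProjectionOnto_eq_of_mem_right (K := M) (Vs x) (C (V m))]
    rw [← hdag m]
    rw [ContinuousLinearMap.adjoint_inner_left]
    rw [hC.inner_swap]
    exact (Submodule.inner_orthogonalProjectionOnto_eq_of_mem_right (K := M) m (C (V (Vs x)))).symm
  have hpyth : ∀ v : H, ‖v‖^2
      = ‖((Submodule.orthogonalProjectionOnto M v : M) : H)‖^2
        + ‖((Submodule.orthogonalProjectionOnto Mᗮ v : Mᗮ) : H)‖^2 := by
    intro v
    have hv : v = ↑(Submodule.orthogonalProjectionOnto M v) + ↑(Submodule.orthogonalProjectionOnto Mᗮ v) := by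
      have hsv := Submodule.starProjection_orthogonal_val (K := M) v
      rw [Submodule.starProjection_apply, Submodule.starProjection_apply] at hsv
      rw [hsv]; abel
    have h0 : ⟪((Submodule.orthogonalProjectionOnto M v : M) : H), ((Submodule.orthogonalProjectionOnto Mᗮ v : Mᗮ) : H)⟫ = 0 := by
      have hm := (Submodule.orthogonalProjectionOnto Mᗮ v).2
      rw [Submodule.mem_orthogonal] at hm
      exact hm _ (Submodule.orthogonalProjectionOnto M v).2
    have := norm_add_sq (𝕜 := ℂ) ((Submodule.orthogonalProjectionOnto M v : M) : H)
      ((Submodule.orthogonalProjectionOnto Mᗮ v : Mᗮ) : H)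
    rw [h0] at this
    simp only [map_zero, mul_zero, add_zero] at this
    calc ‖v‖^2 = ‖(↑(Submodule.orthogonalProjectionOnto M v) + ↑(Submodule.orthogonalProjectionOnto Mᗮ v) : H)‖^2 := by
          rw [← hv]
      _ = _ := by rw [this]
  have hvec : ∀ x : H, D (V (Vs (D x))) = V (Vs x) - V (Vs (V (Vs x))) := by
    intro x
    rw [hR (D x), hR x, hR (x - D (D x))]
    simp only [map_sub]
    abel
  have hEiden : ∀ x : H, (‖Vs (D x)‖^2 : ℝ)
      = RCLike.re ⟪x, V (Vs x)⟫ - ‖V (Vs x)‖^2 := by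
    intro x
    rw [hnormVs (D x), hDi x (V (Vs (D x))), hvec x, inner_sub_right, map_sub,
      ← hRsa x (V (Vs x)), inner_self_eq_norm_sq]
  have hDDz : ∀ z : H, D (D z) = z - V (Vs z) := by
    intro z
    rw [hR z]; abel
  have hDCh2 : ∀ x : H, (‖D (C ((Vs x : M) : H))‖^2 : ℝ)
      = ‖Vs (D x)‖^2
        + ‖((Submodule.orthogonalProjectionOnto Mᗮ (C (V (Vs x))) : Mᗮ) : H)‖^2 := by
    intro x
    have s1 : (‖D (C ((Vs x : M) : H))‖^2 : ℝ)
        = ‖C ((Vs x : M) : H)‖^2 - ‖Vs (C ((Vs x : M) : H))‖^2 := by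
      rw [← inner_self_eq_norm_sq (𝕜 := ℂ)]
      rw [hDi (C ((Vs x : M) : H)) (D (C ((Vs x : M) : H)))]
      rw [hDDz]
      rw [inner_sub_right, map_sub]
      rw [inner_self_eq_norm_sq]
      congr 1
      rw [← ContinuousLinearMap.adjoint_inner_left V]
      rw [inner_self_eq_norm_sq]
    rw [s1]
    have s2 : ‖C ((Vs x : M) : H)‖^2 = RCLike.re ⟪x, V (Vs x)⟫ := by
      rw [Cnorm]
      have : ‖((Vs x : M) : H)‖ = ‖Vs x‖ := rfl
      rw [this, hnormVs x]
    have s3 : (‖Vs (C ((Vs x : M) : H))‖^2 : ℝ)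
        = ‖V (Vs x)‖^2
          - ‖((Submodule.orthogonalProjectionOnto Mᗮ (C (V (Vs x))) : Mᗮ) : H)‖^2 := by
      rw [hE3 x]
      have h1 : (‖(Submodule.orthogonalProjectionOnto M (C (V (Vs x))) : M)‖^2 : ℝ)
          = ‖((Submodule.orthogonalProjectionOnto M (C (V (Vs x))) : M) : H)‖^2 := rfl
      rw [h1]
      have h2 := hpyth (C (V (Vs x)))
      rw [Cnorm] at h2
      linarith
    rw [s2, s3, hEiden x]
    ring
  have hkey : ∀ x : H,
      ‖((Submodule.orthogonalProjectionOnto Mᗮ (C (V (Vs x))) : Mᗮ) : H)‖^2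
        ≤ ‖D (C ((Vs x : M) : H))‖ * ‖K (Submodule.orthogonalProjectionOnto Mᗮ (C (V (Vs x))))‖ := by
    intro x
    set q := Submodule.orthogonalProjectionOnto Mᗮ (C (V (Vs x))) with hqdef
    have hinner : ⟪D (C ((Vs x : M) : H)), K q⟫ = ((‖(q : H)‖^2 : ℝ) : ℂ) := by
      rw [← ContinuousLinearMap.adjoint_inner_left K]
      rw [Submodule.coe_inner]
      rw [hK3 (Vs x)]
      have hsplit : C (V (Vs x)) = ((q : H)) + (C (V (Vs x)) - (q : H)) := by abel
      have hzero : ⟪C (V (Vs x)) - (q : H), (q : H)⟫ = 0 := by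
        have hm := Submodule.sub_starProjection_mem_orthogonal (K := Mᗮ) (C (V (Vs x)))
        rw [Submodule.mem_orthogonal'] at hm
        exact hm _ q.2
      calc ⟪((Submodule.orthogonalProjectionOnto Mᗮ (C (V (Vs x))) : Mᗮ) : H), (q : H)⟫
          = ⟪(q : H), (q : H)⟫ := by rw [← hqdef]
        _ = ((‖(q : H)‖^2 : ℝ) : ℂ) := by
            rw [inner_self_eq_norm_sq_to_K]
            norm_cast
    have hcs := norm_inner_le_norm (𝕜 := ℂ) (D (C ((Vs x : M) : H))) (K q)
    rw [hinner] at hcs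
    calc ‖(q : H)‖^2 = ‖((‖(q : H)‖^2 : ℝ) : ℂ)‖ := by
          rw [Complex.norm_real]
          exact (abs_of_nonneg (by positivity)).symm
      _ ≤ _ := hcs
  -- the conjugated subspace Mc = C⁻¹ M
  let Mc : Submodule ℂ H :=
    { carrier := {y : H | C y ∈ M}
      add_mem' := by
        intro a b ha hb
        simp only [Set.mem_setOf_eq] at *
        rw [Cadd]; exact M.add_mem ha hb
      zero_mem' := by
        simp only [Set.mem_setOf_eq]
        rw [hC.zero]; exact M.zero_mem
      smul_mem' := by
        intro a y hy
        simp only [Set.mem_setOf_eq] at *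
        rw [Csmul]; exact M.smul_mem _ hy }
  have hMclosed : IsClosed (M : Set H) := by
    have h1 : IsComplete (M : Set H) := completeSpace_coe_iff_isComplete.mp ‹CompleteSpace M›
    exact h1.isClosed
  have hMcclosed : IsClosed (Mc : Set H) := by
    have h1 : (Mc : Set H) = C ⁻¹' (M : Set H) := rfl
    rw [h1]
    exact hMclosed.preimage hC.continuous
  haveI : CompleteSpace Mc := hMcclosed.completeSpace_coe
  haveI : CompleteSpace (Mcᗮ : Submodule ℂ H) := Mc.isClosed_orthogonal.completeSpace_coe
  have hCMem : ∀ m : M, C (m : H) ∈ Mc := by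
    intro m
    show C (C (m : H)) ∈ M
    rw [Cinv]; exact m.2
  have hCgMem : C (g : H) ∈ Mcᗮ := by
    rw [Submodule.mem_orthogonal]
    intro u hu
    have h1 : ⟪C (g : H), u⟫ = 0 := by
      rw [hC.inner_swap]
      have h2 := g.2
      rw [Submodule.mem_orthogonal] at h2
      exact h2 (C u) hu
    rw [← inner_conj_symm u (C (g : H)), h1]
    simp
  have hMcperp_to : ∀ z : H, z ∈ Mcᗮ → C z ∈ Mᗮ := by
    intro z hz
    rw [Submodule.mem_orthogonal] at hz
    rw [Submodule.mem_orthogonal]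
    intro u hu
    have h1 : ⟪C z, u⟫ = 0 := by
      rw [hC.inner_swap]
      exact hz (C u) (hCMem ⟨u, hu⟩)
    rw [← inner_conj_symm u (C z), h1]
    simp
  have hprojcomm : ∀ v : H,
      C ((Submodule.orthogonalProjectionOnto Mcᗮ v : Mcᗮ) : H)
        = ((Submodule.orthogonalProjectionOnto Mᗮ (C v) : Mᗮ) : H) := by
    intro v
    symm
    rw [← Submodule.starProjection_apply]
    apply Submodule.eq_starProjection_of_mem_orthogonal
    · exact hMcperp_to _ (Submodule.orthogonalProjectionOnto Mcᗮ v).2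
    · rw [← hC.sub]
      rw [Submodule.mem_orthogonal]
      intro u hu
      have hCu : C u ∈ Mcᗮ := by
        rw [Submodule.mem_orthogonal]
        intro w hw
        have h1 : ⟪C u, w⟫ = 0 := by
          rw [hC.inner_swap]
          rw [Submodule.mem_orthogonal] at hu
          exact hu (C w) hw
        rw [← inner_conj_symm w (C u), h1]
        simp
      have h1 : ⟪C u, v - ((Submodule.orthogonalProjectionOnto Mcᗮ v : Mcᗮ) : H)⟫ = 0 := by
        have hsub := Submodule.sub_starProjection_mem_orthogonal (K := Mcᗮ) v
        rw [Submodule.mem_orthogonal] at hsub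
        exact hsub (C u) hCu
      have h2 : ⟪C (v - ((Submodule.orthogonalProjectionOnto Mcᗮ v : Mcᗮ) : H)), u⟫ = 0 := by
        rw [hC.inner_swap]
        exact h1
      rw [← inner_conj_symm u _, h2]
      simp
  -- the approximation subspace
  let Rop : H →L[ℂ] H := V ∘L Vs
  let Pc : H →L[ℂ] H := (Mcᗮ).subtypeL ∘L Submodule.orthogonalProjectionOnto (Mcᗮ)
  let A1 : H →L[ℂ] M := Vs ∘L D
  let A2 : H →L[ℂ] H := Pc ∘L Rop
  let Ψ : H →ₗ[ℂ] WithLp 2 (M × H) :=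
    (WithLp.linearEquiv 2 ℂ (M × H)).symm.toLinearMap.comp
      (LinearMap.prod (A1 : H →ₗ[ℂ] M) (A2 : H →ₗ[ℂ] H))
  let W : Submodule ℂ (WithLp 2 (M × H)) := LinearMap.range Ψ
  let τ : WithLp 2 (M × H) := (WithLp.linearEquiv 2 ℂ (M × H)).symm (0, C (g : H))
  have hΨfst : ∀ x : H, (Ψ x).fst = Vs (D x) := fun x => rfl
  have hΨsnd : ∀ x : H, (Ψ x).snd = Pc (Rop x) := fun x => rfl
  have hτfst : τ.fst = (0 : M) := rfl
  have hτsnd : τ.snd = C (g : H) := rfl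
  have hτ : τ ∈ (Wᗮ)ᗮ := by
    rw [Submodule.mem_orthogonal]
    intro p hp
    rw [Submodule.mem_orthogonal] at hp
    have hall : ∀ x : H, ⟪Vs (D x), p.fst⟫ + ⟪Pc (Rop x), p.snd⟫ = 0 := by
      intro x
      have h1 := hp (Ψ x) (LinearMap.mem_range.mpr ⟨x, rfl⟩)
      rw [WithLp.prod_inner_apply] at h1
      exact h1
    have hPcsym : ∀ a b : H, ⟪Pc a, b⟫ = ⟪a, Pc b⟫ := by
      intro a b
      show ⟪((Submodule.orthogonalProjectionOnto Mcᗮ a : Mcᗮ) : H), b⟫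
        = ⟪a, ((Submodule.orthogonalProjectionOnto Mcᗮ b : Mcᗮ) : H)⟫
      exact Submodule.inner_starProjection_left_eq_right Mcᗮ a b
    have hvec0 : D (V p.fst) + Rop (Pc p.snd) = 0 := by
      apply ext_inner_left ℂ
      intro v
      rw [inner_zero_right, inner_add_right]
      have e1 : ⟪v, D (V p.fst)⟫ = ⟪Vs (D v), p.fst⟫ := by
        rw [← hDi]
        rw [← ContinuousLinearMap.adjoint_inner_left V]
      have e2 : ⟪v, Rop (Pc p.snd)⟫ = ⟪Pc (Rop v), p.snd⟫ := by
        have f1 : ⟪v, Rop (Pc p.snd)⟫ = ⟪Rop v, Pc p.snd⟫ := (hRsa v (Pc p.snd)).symm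
        rw [f1, ← hPcsym]
      rw [e1, e2]
      exact hall v
    set ψ := Pc p.snd with hψdef
    have hψrange : ψ ∈ LinearMap.range (D : H →ₗ[ℂ] H) := by
      have h1 : V (Vs ψ) = - D (V p.fst) := by
        have h2 : Rop ψ = V (Vs ψ) := rfl
        have h3 := hvec0
        rw [add_comm] at h3
        rw [← h2]
        exact eq_neg_of_add_eq_zero_left h3
      refine LinearMap.mem_range.mpr ⟨D ψ - V p.fst, ?_⟩
      rw [map_sub, ContinuousLinearMap.coe_coe]
      have h4 : ψ = D (D ψ) + V (Vs ψ) := by rw [hR ψ]; abel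
      have h5 : D (V p.fst) = - V (Vs ψ) := by rw [h1]; abel
      rw [h5, sub_neg_eq_add]
      exact h4.symm
    have hψim : ψ ∈ C '' (Mᗮ : Set H) := by
      refine ⟨C ψ, ?_, Cinv _⟩
      have : ψ ∈ Mcᗮ := (Submodule.orthogonalProjectionOnto Mcᗮ p.snd).2
      exact SetLike.mem_coe.mpr (hMcperp_to ψ this)
    have hψ0 : ψ = 0 := htriv ψ hψrange hψim
    rw [WithLp.prod_inner_apply]
    change ⟪p.fst, τ.fst⟫ + ⟪p.snd, τ.snd⟫ = 0
    rw [hτfst, hτsnd, inner_zero_right, zero_add]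
    have hdec : p.snd = ψ + (p.snd - ψ) := by abel
    rw [hdec, inner_add_left]
    have t1 : ⟪ψ, C (g : H)⟫ = 0 := by rw [hψ0]; simp
    have t2 : ⟪p.snd - ψ, C (g : H)⟫ = 0 := by
      have hmem : p.snd - ψ ∈ (Mcᗮ)ᗮ :=
        Submodule.sub_starProjection_mem_orthogonal (K := Mcᗮ) p.snd
      rw [Submodule.mem_orthogonal'] at hmem
      exact hmem _ hCgMem
    rw [t1, t2]
    simp
  have hτcl : τ ∈ closure (W : Set (WithLp 2 (M × H))) := by
    rw [← Submodule.topologicalClosure_coe, ← Submodule.orthogonal_orthogonal_eq_closure]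
    exact hτ
  -- final quantitative argument
  have sqle : ∀ a b : ℝ, 0 ≤ a → 0 ≤ b → a^2 ≤ b^2 → a ≤ b := sqle_aux
  have hKgle : ‖K g‖ ≤ ‖(g : H)‖ := by
    calc ‖K g‖ ≤ ‖K‖ * ‖g‖ := K.le_opNorm g
      _ ≤ 1 * ‖g‖ := mul_le_mul_of_nonneg_right hK1 (norm_nonneg g)
      _ = ‖(g : H)‖ := by rw [one_mul]; rfl
  have hbound : ∀ ε : ℝ, 0 < ε →
      ‖(g : H)‖^2 ≤ ‖K g‖ * ‖(g : H)‖ + ε * (5 * ‖(g : H)‖ + 5 * ε) := by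
    intro ε hε
    rw [Metric.mem_closure_iff] at hτcl
    obtain ⟨w, hwW, hwd⟩ := hτcl ε hε
    obtain ⟨x, rfl⟩ := LinearMap.mem_range.mp (SetLike.mem_coe.mp hwW)
    have hdist : ‖τ - Ψ x‖ < ε := by rw [← dist_eq_norm]; exact hwd
    have hsq : ‖(τ - Ψ x).fst‖^2 + ‖(τ - Ψ x).snd‖^2 ≤ ε^2 := by
      rw [← WithLp.prod_norm_sq_eq_of_L2]
      nlinarith [norm_nonneg (τ - Ψ x), hdist]
    have e1' : (τ - Ψ x).fst = (0 : M) - Vs (D x) := rfl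
    have e2' : (τ - Ψ x).snd = C (g : H) - Pc (Rop x) := rfl
    rw [e1', e2', zero_sub, norm_neg] at hsq
    have h1 : ‖Vs (D x)‖ ≤ ε :=
      sqle _ _ (norm_nonneg _) hε.le
        (by nlinarith [sq_nonneg ‖C (g : H) - Pc (Rop x)‖])
    have h2' : ‖C (g : H) - Pc (Rop x)‖ ≤ ε :=
      sqle _ _ (norm_nonneg _) hε.le
        (by nlinarith [sq_nonneg ‖Vs (D x)‖])
    set q : Mᗮ := Submodule.orthogonalProjectionOnto Mᗮ (C (V (Vs x))) with hqdef2
    have hCRop : C (Pc (Rop x)) = ((q : Mᗮ) : H) := by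
      have e : Pc (Rop x) = ((Submodule.orthogonalProjectionOnto Mcᗮ (Rop x) : Mcᗮ) : H) := rfl
      rw [e, hprojcomm (Rop x)]
      rfl
    have hqg : ‖(q : H) - (g : H)‖ ≤ ε := by
      have e3 : (q : H) - (g : H) = C (Pc (Rop x)) - C (C (g : H)) := by rw [hCRop, Cinv]
      rw [e3, ← hC.sub, Cnorm]
      calc ‖Pc (Rop x) - C (g : H)‖ = ‖C (g : H) - Pc (Rop x)‖ := norm_sub_rev _ _
        _ ≤ ε := h2'
    have hkx := hkey x
    have hDx := hDCh2 x
    have hq1 : ‖(q : H)‖ ≤ ‖(g : H)‖ + ε := by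
      have t := norm_sub_norm_le ((q : H)) ((g : H))
      linarith
    have hq2 : ‖(g : H)‖ ≤ ‖(q : H)‖ + ε := by
      have t := norm_sub_norm_le ((g : H)) ((q : H))
      have e := norm_sub_rev ((q : H)) ((g : H))
      linarith
    have hKq : ‖K q‖ ≤ ‖K g‖ + ε := by
      have e1 : K q = K g + K (q - g) := by rw [← map_add]; congr 1; abel
      have e2 : ‖K (q - g)‖ ≤ ‖q - g‖ := by
        calc ‖K (q - g)‖ ≤ ‖K‖ * ‖q - g‖ := K.le_opNorm _
          _ ≤ 1 * ‖q - g‖ := mul_le_mul_of_nonneg_right hK1 (norm_nonneg _)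
          _ = ‖q - g‖ := one_mul _
      have e3 : ‖q - g‖ = ‖(q : H) - (g : H)‖ := rfl
      calc ‖K q‖ = ‖K g + K (q - g)‖ := by rw [← e1]
        _ ≤ ‖K g‖ + ‖K (q - g)‖ := norm_add_le _ _
        _ ≤ ‖K g‖ + ε := by rw [e3] at e2; linarith
    have hDb : ‖D (C ((Vs x : M) : H))‖ ≤ ε + ‖(q : H)‖ := by
      refine sqle _ _ (norm_nonneg _) (by positivity) ?_
      rw [hDx]
      nlinarith [h1, norm_nonneg (Vs (D x)), norm_nonneg ((q : H)), hε.le]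
    have m1 : ‖D (C ((Vs x : M) : H))‖ * ‖K q‖ ≤ (ε + ‖(q : H)‖) * (‖K g‖ + ε) := by
      apply mul_le_mul hDb hKq (norm_nonneg _) (by positivity)
    have c2 : ‖(q : H)‖^2 ≤ (ε + ‖(q : H)‖) * (‖K g‖ + ε) := le_trans hkx m1
    have c1 : ‖(g : H)‖^2 ≤ ‖(q : H)‖^2 + 2*ε*‖(q : H)‖ + ε^2 := by
      nlinarith [hq2, norm_nonneg ((q : H)), norm_nonneg ((g : H)), hε.le,
        mul_nonneg (by linarith : (0:ℝ) ≤ ‖(q : H)‖ + ε - ‖(g : H)‖)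
          (by positivity : (0:ℝ) ≤ ‖(q : H)‖ + ε + ‖(g : H)‖)]
    nlinarith [c1, c2, mul_le_mul_of_nonneg_right hq1 (norm_nonneg (K g)),
      mul_le_mul_of_nonneg_left hKgle hε.le, mul_le_mul_of_nonneg_left hq1 hε.le,
      norm_nonneg (K g), norm_nonneg ((q : H)), hε.le]
  have hfin : ‖(g : H)‖^2 ≤ ‖K g‖ * ‖(g : H)‖ := by
    by_contra hcon
    push_neg at hcon
    set δ := ‖(g : H)‖^2 - ‖K g‖ * ‖(g : H)‖ with hδdef
    have hδpos : 0 < δ := by linarith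
    have hden : (0:ℝ) < 10 * ‖(g : H)‖ + 10 := by positivity
    set ε := min (δ / (10 * ‖(g : H)‖ + 10)) 1 with hεdef
    have hεpos : 0 < ε := by
      apply lt_min
      · positivity
      · norm_num
    have hε1 : ε ≤ 1 := min_le_right _ _
    have hε2 : ε ≤ δ / (10 * ‖(g : H)‖ + 10) := min_le_left _ _
    have hb := hbound ε hεpos
    have hsmall : ε * (5 * ‖(g : H)‖ + 5 * ε) ≤ δ / 2 := by
      have e1 : ε * (5 * ‖(g : H)‖ + 5 * ε) ≤ ε * (5 * ‖(g : H)‖ + 5) := by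
        apply mul_le_mul_of_nonneg_left _ hεpos.le
        nlinarith
      have e2 : ε * (5 * ‖(g : H)‖ + 5) ≤ (δ / (10 * ‖(g : H)‖ + 10)) * (5 * ‖(g : H)‖ + 5) := by
        apply mul_le_mul_of_nonneg_right hε2 (by positivity)
      have e3 : (δ / (10 * ‖(g : H)‖ + 10)) * (5 * ‖(g : H)‖ + 5) = δ / 2 := by
        field_simp
        ring
      linarith
    linarith
  have hge : ‖(g : H)‖ ≤ ‖K g‖ := by
    rcases eq_or_lt_of_le (norm_nonneg ((g : H))) with h0 | hpos
    · rw [← h0]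
      exact norm_nonneg _
    · refine le_of_mul_le_mul_right ?_ hpos
      nlinarith [hfin]
  exact le_antisymm hKgle hge
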